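/- Define s(x) = (x - 1/2) log x - x and h(x) = log Γ(x) - s(x) for x > 0. There exists a constant C > 0 such that |h''(x)| ≤ C/x³ for all x ≥ 1/4. -/

import Mathlib

noncomputable def s (x : ℝ) : ℝ := (x - 1 / 2) * Real.log x - x

noncomputable def h (x : ℝ) : ℝ := Real.log (Real.Gamma x) - s x

open Real Filter Topology Finset

/-- Trigamma function as a series. -/
noncomputable def psi1 (x : ℝ) : ℝ := ∑' m : ℕ, 1 / (x + m) ^ 2

/-- Digamma function. -/
noncomputable def psi0 (x : ℝ) : ℝ :=
  -Real.eulerMascheroniConstant + ∑' m : ℕ, (1 / ((m : ℝ) + 1) - 1 / (x + m))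

lemma summable_base : Summable fun m : ℕ => 1 / ((m : ℝ) + 1) ^ 2 := by
  have h1 : Summable fun n : ℕ => 1 / (n : ℝ) ^ 2 :=
    summable_one_div_nat_pow.2 one_lt_two
  have := (summable_nat_add_iff (f := fun n : ℕ => 1 / (n : ℝ) ^ 2) 1).2 h1
  refine this.congr fun n => ?_
  push_cast
  ring

lemma min_mul_le {a t : ℝ} (ha : 0 < a) (hat : a ≤ t) (m : ℕ) :
    min a 1 * ((m : ℝ) + 1) ≤ t + m := by
  have h1 : min a 1 ≤ a := min_le_left _ _
  have h2 : min a 1 ≤ 1 := min_le_right _ _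
  have h3 : (0 : ℝ) ≤ m := Nat.cast_nonneg m
  nlinarith

lemma inv_sq_bound {a t : ℝ} (ha : 0 < a) (hat : a ≤ t) (m : ℕ) :
    1 / (t + m) ^ 2 ≤ 1 / (min a 1) ^ 2 * (1 / ((m : ℝ) + 1) ^ 2) := by
  have hm : 0 < min a 1 := lt_min ha one_pos
  have h3 : (0 : ℝ) ≤ m := Nat.cast_nonneg m
  have htm : 0 < t + m := by nlinarith
  have key : (min a 1 * ((m : ℝ) + 1)) ^ 2 ≤ (t + m) ^ 2 :=
    pow_le_pow_left₀ (by positivity) (min_mul_le ha hat m) 2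
  calc 1 / (t + m) ^ 2 ≤ 1 / (min a 1 * ((m : ℝ) + 1)) ^ 2 :=
        one_div_le_one_div_of_le (by positivity) key
    _ = 1 / (min a 1) ^ 2 * (1 / ((m : ℝ) + 1) ^ 2) := by
        rw [mul_pow]; field_simp

lemma g_bound {a b t : ℝ} (ha : 0 < a) (ht : t ∈ Set.Ioo a b) (m : ℕ) :
    |1 / ((m : ℝ) + 1) - 1 / (t + m)| ≤ (b + 1) / min a 1 * (1 / ((m : ℝ) + 1) ^ 2) := by
  have h1 : 0 < t := ha.trans ht.1
  have h3 : (0 : ℝ) ≤ m := Nat.cast_nonneg m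
  have htm : 0 < t + m := by positivity
  have hm : 0 < min a 1 := lt_min ha one_pos
  have e : 1 / ((m : ℝ) + 1) - 1 / (t + m) = (t - 1) / (((m : ℝ) + 1) * (t + m)) := by
    field_simp
    ring
  rw [e, abs_div, abs_of_pos (show (0:ℝ) < ((m : ℝ) + 1) * (t + m) by positivity)]
  have h2 : |t - 1| ≤ b + 1 := by
    rw [abs_le]; constructor <;> nlinarith [ht.1, ht.2]
  have hb : 0 < b := ha.trans (ht.1.trans ht.2)
  have h4 : min a 1 * ((m : ℝ) + 1) ≤ t + m := min_mul_le ha ht.1.le m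
  have h5 : min a 1 * ((m : ℝ) + 1) ^ 2 ≤ ((m : ℝ) + 1) * (t + m) := by nlinarith
  calc |t - 1| / (((m : ℝ) + 1) * (t + m))
      ≤ (b + 1) / (min a 1 * ((m : ℝ) + 1) ^ 2) :=
        div_le_div₀ (by linarith) h2 (by positivity) h5
    _ = (b + 1) / min a 1 * (1 / ((m : ℝ) + 1) ^ 2) := by
        field_simp

lemma summable_inv_sq {x : ℝ} (hx : 0 < x) : Summable fun m : ℕ => 1 / (x + m) ^ 2 := by
  refine Summable.of_nonneg_of_le (fun m => by positivity)
    (fun m => inv_sq_bound hx le_rfl m) ?_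
  exact summable_base.mul_left _

lemma summable_g {t : ℝ} (ht : 0 < t) :
    Summable fun m : ℕ => 1 / ((m : ℝ) + 1) - 1 / (t + m) := by
  refine Summable.of_norm ?_
  refine Summable.of_nonneg_of_le (fun m => norm_nonneg _)
    (fun m => g_bound (a := t / 2) (b := t + 1) (by linarith)
      ⟨by linarith, by linarith⟩ m) ?_
  exact summable_base.mul_left _

lemma hasDerivAt_logGammaSeq (n : ℕ) {t : ℝ} (ht : 0 < t) :
    HasDerivAt (fun u => Real.BohrMollerup.logGammaSeq u n)
      (Real.log n - ∑ m ∈ range (n + 1), 1 / (t + m)) t := by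
  have hsum : HasDerivAt (fun u : ℝ => ∑ m ∈ range (n + 1), Real.log (u + m))
      (∑ m ∈ range (n + 1), 1 / (t + m)) t := by
    refine HasDerivAt.fun_sum fun m _ => ?_
    have hm : t + (m : ℝ) ≠ 0 := by positivity
    have := ((hasDerivAt_id t).add_const (m : ℝ)).log hm
    simpa using this
  have h2 : HasDerivAt (fun u : ℝ => u * Real.log n + Real.log (Nat.factorial n))
      (Real.log n) t := (hasDerivAt_mul_const _).add_const _
  have := h2.fun_sub hsum
  simpa [Real.BohrMollerup.logGammaSeq] using this

lemma tendsto_c :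
    Tendsto (fun n : ℕ => Real.log n - ∑ m ∈ range (n + 1), 1 / ((m : ℝ) + 1)) atTop
      (𝓝 (-Real.eulerMascheroniConstant)) := by
  have key : ∀ n : ℕ, Real.log n - ∑ m ∈ range (n + 1), 1 / ((m : ℝ) + 1)
      = -(((harmonic n : ℝ)) - Real.log n) - 1 / ((n : ℝ) + 1) := by
    intro n
    have hh : ((harmonic (n + 1) : ℚ) : ℝ) = ∑ m ∈ range (n + 1), 1 / ((m : ℝ) + 1) := by
      rw [harmonic]
      push_cast
      simp [one_div]
    have hs : ((harmonic (n + 1) : ℚ) : ℝ) = (harmonic n : ℝ) + 1 / ((n : ℝ) + 1) := by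
      rw [harmonic_succ]
      push_cast
      ring
    rw [← hh, hs]
    ring
  have h1 := Real.tendsto_harmonic_sub_log
  have h2 : Tendsto (fun n : ℕ => 1 / ((n : ℝ) + 1)) atTop (𝓝 0) :=
    tendsto_one_div_add_atTop_nhds_zero_nat
  have h3 := h1.neg.sub h2
  rw [sub_zero] at h3
  exact h3.congr fun n => (key n).symm

lemma hasDerivAt_logGamma {y : ℝ} (hy : 0 < y) :
    HasDerivAt (fun t => Real.log (Real.Gamma t)) (psi0 y) y := by
  have ha : 0 < y / 2 := by linarith
  have hym : y ∈ Set.Ioo (y / 2) (y + 1) := ⟨by linarith, by linarith⟩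
  have hG : TendstoUniformlyOn
      (fun (n : ℕ) (t : ℝ) => ∑ m ∈ range n, (1 / ((m : ℝ) + 1) - 1 / (t + m)))
      (fun t => ∑' m : ℕ, (1 / ((m : ℝ) + 1) - 1 / (t + m))) atTop (Set.Ioo (y / 2) (y + 1)) := by
    refine tendstoUniformlyOn_tsum_nat (summable_base.mul_left ((y + 1 + 1) / min (y / 2) 1))
      fun m t htm => ?_
    simpa [Real.norm_eq_abs] using g_bound ha htm m
  have hG' : TendstoUniformlyOn
      (fun (n : ℕ) (t : ℝ) => ∑ m ∈ range (n + 1), (1 / ((m : ℝ) + 1) - 1 / (t + m)))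
      (fun t => ∑' m : ℕ, (1 / ((m : ℝ) + 1) - 1 / (t + m))) atTop (Set.Ioo (y / 2) (y + 1)) :=
    fun u hu => (tendsto_add_atTop_nat 1).eventually (hG u hu)
  have hcu : TendstoUniformlyOn
      (fun (n : ℕ) (_ : ℝ) => Real.log n - ∑ m ∈ range (n + 1), 1 / ((m : ℝ) + 1))
      (fun _ => -Real.eulerMascheroniConstant) atTop (Set.Ioo (y / 2) (y + 1)) :=
    tendsto_c.tendstoUniformlyOn_const _
  have hunif : TendstoUniformlyOn
      (fun (n : ℕ) (t : ℝ) => Real.log n - ∑ m ∈ range (n + 1), 1 / (t + m))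
      psi0 atTop (Set.Ioo (y / 2) (y + 1)) := by
    have h4 := (hcu.add hG').congr (F' := fun (n : ℕ) (t : ℝ) =>
      Real.log n - ∑ m ∈ range (n + 1), 1 / (t + m))
      (Eventually.of_forall fun n t _ => by
        simp only [Pi.add_apply, Finset.sum_sub_distrib]
        ring)
    refine h4.congr_right fun t _ => ?_
    simp [psi0]
  refine hasDerivAt_of_tendstoUniformlyOn isOpen_Ioo hunif
    (Eventually.of_forall fun n t htm => hasDerivAt_logGammaSeq n (ha.trans htm.1))
    (fun t htm => Real.BohrMollerup.tendsto_log_gamma (ha.trans htm.1)) hym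

lemma hasDerivAt_psi0 {y : ℝ} (hy : 0 < y) : HasDerivAt psi0 (psi1 y) y := by
  have ha : 0 < y / 2 := by linarith
  have hym : y ∈ Set.Ioo (y / 2) (y + 1) := ⟨by linarith, by linarith⟩
  have hf' : TendstoUniformlyOn
      (fun (n : ℕ) (t : ℝ) => ∑ m ∈ range n, 1 / (t + m) ^ 2)
      (fun t => ∑' m : ℕ, 1 / (t + m) ^ 2) atTop (Set.Ioo (y / 2) (y + 1)) := by
    refine tendstoUniformlyOn_tsum_nat (summable_base.mul_left (1 / min (y / 2) 1 ^ 2))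
      fun m t htm => ?_
    have ht : 0 < t := ha.trans htm.1
    have h0 : (0:ℝ) ≤ (m:ℝ) := Nat.cast_nonneg m
    have hpos : (0:ℝ) < t + m := by positivity
    rw [Real.norm_eq_abs, abs_of_pos (by positivity)]
    exact inv_sq_bound ha htm.1.le m
  have hf : ∀ n : ℕ, ∀ t : ℝ, t ∈ Set.Ioo (y / 2) (y + 1) →
      HasDerivAt (fun u : ℝ => -Real.eulerMascheroniConstant +
        ∑ m ∈ range n, (1 / ((m : ℝ) + 1) - 1 / (u + m)))
        (∑ m ∈ range n, 1 / (t + m) ^ 2) t := by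
    intro n t htm
    have ht : 0 < t := ha.trans htm.1
    refine HasDerivAt.const_add _ (HasDerivAt.fun_sum fun m _ => ?_)
    have hm : t + (m : ℝ) ≠ 0 := by positivity
    have h1 := (((hasDerivAt_id t).add_const (m : ℝ)).inv hm).const_sub (1 / ((m : ℝ) + 1))
    simpa [one_div, neg_div, neg_neg] using h1
  have hfg : ∀ t : ℝ, t ∈ Set.Ioo (y / 2) (y + 1) →
      Tendsto (fun n : ℕ => -Real.eulerMascheroniConstant +
        ∑ m ∈ range n, (1 / ((m : ℝ) + 1) - 1 / (t + m))) atTop (𝓝 (psi0 t)) := by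
    intro t htm
    have ht : 0 < t := ha.trans htm.1
    exact Tendsto.const_add _ (summable_g ht).hasSum.tendsto_sum_nat
  exact hasDerivAt_of_tendstoUniformlyOn isOpen_Ioo hf'
    (Eventually.of_forall hf) hfg hym

lemma tendsto_inv_add {x : ℝ} (hx : 0 < x) :
    Tendsto (fun n : ℕ => 1 / (x + n)) atTop (𝓝 0) := by
  simp only [one_div]
  exact (tendsto_atTop_add_const_left atTop x tendsto_natCast_atTop_atTop).inv_tendsto_atTop

lemma hasSum_telescope {x : ℝ} (hx : 0 < x) :
    HasSum (fun m : ℕ => 1 / (x + m) - 1 / (x + m + 1)) (1 / x) := by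
  have hnn : ∀ m : ℕ, 0 ≤ 1 / (x + m) - 1 / (x + m + 1) := by
    intro m
    have h0 : (0:ℝ) ≤ (m:ℝ) := Nat.cast_nonneg m
    have h1 : (0:ℝ) < x + m := by positivity
    have := one_div_le_one_div_of_le h1 (show x + m ≤ x + m + 1 by linarith)
    linarith
  rw [hasSum_iff_tendsto_nat_of_nonneg hnn]
  have key : ∀ n : ℕ, ∑ m ∈ range n, (1 / (x + m) - 1 / (x + m + 1))
      = 1 / x - 1 / (x + n) := by
    intro n
    calc ∑ m ∈ range n, (1 / (x + m) - 1 / (x + m + 1))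
        = ∑ m ∈ range n, (1 / (x + m) - 1 / (x + ↑(m + 1))) := by
          refine Finset.sum_congr rfl fun m _ => ?_
          push_cast
          ring
      _ = 1 / (x + (0 : ℕ)) - 1 / (x + n) := Finset.sum_range_sub' (fun m : ℕ => 1 / (x + m)) n
      _ = 1 / x - 1 / (x + n) := by norm_num
  simp only [key]
  have := (tendsto_inv_add hx)
  simpa using tendsto_const_nhds.sub this

lemma psi1_lower {x : ℝ} (hx : 0 < x) : 1 / x + 1 / (2 * x ^ 2) ≤ psi1 x := by
  have hf := summable_inv_sq hx
  have hf1 : Summable fun m : ℕ => 1 / (x + m + 1) ^ 2 := by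
    refine (summable_inv_sq (show (0:ℝ) < x + 1 by linarith)).congr fun m => ?_
    ring_nf
  have hterm : ∀ m : ℕ, 1 / (x + m) - 1 / (x + m + 1)
      ≤ 1 / 2 * (1 / (x + m) ^ 2 + 1 / (x + m + 1) ^ 2) := by
    intro m
    have h0 : (0:ℝ) ≤ (m:ℝ) := Nat.cast_nonneg m
    have hp : (0:ℝ) < x + m := by positivity
    have hq : (0:ℝ) < x + m + 1 := by linarith
    have e2 : 1 / 2 * (1 / (x + m) ^ 2 + 1 / (x + m + 1) ^ 2) - (1 / (x + m) - 1 / (x + m + 1))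
        = ((x + m) - (x + m + 1)) ^ 2 / (2 * (x + m) ^ 2 * (x + m + 1) ^ 2) := by
      field_simp
      ring
    have e3 : (0:ℝ) ≤ ((x + m) - (x + m + 1)) ^ 2 / (2 * (x + m) ^ 2 * (x + m + 1) ^ 2) := by
      positivity
    linarith
  have hsum := (hasSum_telescope hx).tsum_eq
  have hle : (1 : ℝ) / x ≤ ∑' m : ℕ, 1 / 2 * (1 / (x + m) ^ 2 + 1 / (x + m + 1) ^ 2) := by
    rw [← hsum]
    exact Summable.tsum_le_tsum hterm (hasSum_telescope hx).summable ((hf.add hf1).mul_left _)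
  have htsum : ∑' m : ℕ, 1 / 2 * (1 / (x + m) ^ 2 + 1 / (x + m + 1) ^ 2)
      = 1 / 2 * (psi1 x + (psi1 x - 1 / x ^ 2)) := by
    rw [tsum_mul_left, Summable.tsum_add hf hf1]
    have hshift : ∑' m : ℕ, 1 / (x + m + 1) ^ 2 = psi1 x - 1 / x ^ 2 := by
      have h0 := Summable.tsum_eq_zero_add hf
      have : ∑' m : ℕ, 1 / (x + ((m : ℝ) + 1)) ^ 2 = ∑' m : ℕ, 1 / (x + m + 1) ^ 2 := by
        refine tsum_congr fun m => ?_
        ring_nf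
      rw [psi1]
      simp only [Nat.cast_add, Nat.cast_one] at h0
      rw [h0]
      simp only [Nat.cast_zero, add_zero] at *
      rw [← this]
      ring
    rw [hshift, psi1]
  rw [htsum] at hle
  rw [show (1:ℝ) / (2 * x ^ 2) = 1 / 2 * (1 / x ^ 2) by ring]
  linarith

lemma psi1_upper {x : ℝ} (hx : 0 < x) : psi1 x ≤ 1 / x ^ 2 + 1 / (x + 1 / 2) := by
  have hf := summable_inv_sq hx
  have hf1 : Summable fun m : ℕ => 1 / (x + m + 1) ^ 2 := by
    refine (summable_inv_sq (show (0:ℝ) < x + 1 by linarith)).congr fun m => ?_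
    ring_nf
  have hx2 : (0:ℝ) < x + 1 / 2 := by linarith
  have htel := hasSum_telescope hx2
  have hterm : ∀ m : ℕ, 1 / (x + m + 1) ^ 2
      ≤ 1 / (x + 1 / 2 + m) - 1 / (x + 1 / 2 + m + 1) := by
    intro m
    have h0 : (0:ℝ) ≤ (m:ℝ) := Nat.cast_nonneg m
    have hp : (0:ℝ) < x + 1 / 2 + m := by positivity
    have hq : (0:ℝ) < x + 1 / 2 + m + 1 := by linarith
    have e1 : 1 / (x + 1 / 2 + m) - 1 / (x + 1 / 2 + m + 1)
        = 1 / ((x + 1 / 2 + m) * (x + 1 / 2 + m + 1)) := by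
      field_simp
      ring
    rw [e1]
    refine one_div_le_one_div_of_le (by positivity) ?_
    nlinarith
  have hshift : ∑' m : ℕ, 1 / (x + m + 1) ^ 2 = psi1 x - 1 / x ^ 2 := by
    have h0 := Summable.tsum_eq_zero_add hf
    have e : ∑' m : ℕ, 1 / (x + ((m : ℝ) + 1)) ^ 2 = ∑' m : ℕ, 1 / (x + m + 1) ^ 2 := by
      refine tsum_congr fun m => ?_
      ring_nf
    rw [psi1]
    simp only [Nat.cast_add, Nat.cast_one] at h0
    rw [h0]
    simp only [Nat.cast_zero, add_zero]
    rw [← e]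
    ring
  have hle : ∑' m : ℕ, 1 / (x + m + 1) ^ 2 ≤ 1 / (x + 1 / 2) := by
    rw [← htel.tsum_eq]
    exact Summable.tsum_le_tsum hterm hf1 htel.summable
  rw [hshift] at hle
  linarith

lemma hasDerivAt_s {y : ℝ} (hy : 0 < y) :
    HasDerivAt s (Real.log y - 1 / (2 * y)) y := by
  have h1 := (((hasDerivAt_id y).sub_const (1/2 : ℝ)).mul (Real.hasDerivAt_log hy.ne')).sub
    (hasDerivAt_id y)
  have : HasDerivAt s (1 * Real.log y + (y - 1/2) * y⁻¹ - 1) y := h1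
  convert this using 1
  field_simp
  ring

lemma hasDerivAt_s' {y : ℝ} (hy : 0 < y) :
    HasDerivAt (fun u => Real.log u - 1 / (2 * u)) (1 / y + 1 / (2 * y ^ 2)) y := by
  have h2y : (2 : ℝ) * y ≠ 0 := by positivity
  have h1 := (Real.hasDerivAt_log hy.ne').fun_sub (((hasDerivAt_id y).const_mul 2).fun_inv h2y)
  have e : y⁻¹ - -2 / (2 * y) ^ 2 = 1 / y + 1 / (2 * y ^ 2) := by
    field_simp
    ring
  rw [← e]
  simpa [one_div] using h1

theorem h_second_deriv_bound :
    ∃ C > 0, ∀ x : ℝ, 1 / 4 ≤ x → |deriv (deriv h) x| ≤ C / x ^ 3 := by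
  refine ⟨1, one_pos, fun x hx => ?_⟩
  have hx0 : 0 < x := lt_of_lt_of_le (by norm_num) hx
  have hev : deriv h =ᶠ[𝓝 x] fun y => psi0 y - (Real.log y - 1 / (2 * y)) := by
    filter_upwards [isOpen_Ioo.mem_nhds
      (show x ∈ Set.Ioo (x / 2) (x + 1) from ⟨by linarith, by linarith⟩)] with y hy
    have hy0 : 0 < y := by
      have := hy.1
      linarith
    have H : HasDerivAt h (psi0 y - (Real.log y - 1 / (2 * y))) y := by
      unfold h
      exact (hasDerivAt_logGamma hy0).sub (hasDerivAt_s hy0)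
    exact H.deriv
  have hd2 : deriv (deriv h) x = psi1 x - (1 / x + 1 / (2 * x ^ 2)) := by
    rw [hev.deriv_eq]
    exact ((hasDerivAt_psi0 hx0).sub (hasDerivAt_s' hx0)).deriv
  rw [hd2]
  have hl := psi1_lower hx0
  have hu := psi1_upper hx0
  have hpos : (0:ℝ) < 1 / x ^ 3 := by positivity
  rw [abs_le]
  constructor
  · simp only [one_div] at *
    linarith
  · have e : 1 / x + 1 / (2 * x ^ 2) + 1 / x ^ 3 - (1 / x ^ 2 + 1 / (x + 1 / 2))
        = (3 * x / 2 + 1) / (2 * x ^ 3 * (x + 1 / 2)) := by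
      field_simp
      ring
    have hpos2 : (0:ℝ) ≤ (3 * x / 2 + 1) / (2 * x ^ 3 * (x + 1 / 2)) := by positivity
    simp only [one_div] at *
    linarith
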